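/- Let ε > 0 and let w be a bounded continuous function on the closed slab {(z, x₂, x₃) ∈ ℝ³ : 0 ≤ z ≤ ε} which is C² on the open slab {0 < z < ε} and satisfies the differential inequality z·(∂²_z w + ∂²_{x₂} w + ∂²_{x₃} w) − ∂_z w ≥ 0 on the open slab (i.e. w is subharmonic for the hyperbolic Laplacian). Suppose w(0, x₂, x₃) ≤ 0 and w(ε, x₂, x₃) ≤ 0 for all (x₂, x₃) ∈ ℝ², and that limsup of sup_{z ∈ [0,ε]} w(z, x₂, x₃) as ‖(x₂, x₃)‖ → ∞ is ≤ 0. Then w ≤ 0 on the whole slab. -/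

import Mathlib

/-- Partial derivative of a curried function `u : ℝ → ℝ → ℝ → ℝ` in the first
variable. -/
noncomputable def pd1 (u : ℝ → ℝ → ℝ → ℝ) (z x y : ℝ) : ℝ :=
  deriv (fun t => u t x y) z

/-- Partial derivative in the second variable. -/
noncomputable def pd2 (u : ℝ → ℝ → ℝ → ℝ) (z x y : ℝ) : ℝ :=
  deriv (fun t => u z t y) x

/-- Partial derivative in the third variable. -/
noncomputable def pd3 (u : ℝ → ℝ → ℝ → ℝ) (z x y : ℝ) : ℝ :=
  deriv (fun t => u z x t) y

/-!
For `L u = z Δu - ∂_z u` we have `L z = -1`, so `V = w - η z` with `η > 0` satisfies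
`L V ≥ η > 0` in the open slab. At an interior local maximum of `V`, however, `∂_z V = 0` and
all second derivatives are `≤ 0`, whence `L V ≤ 0`. So the maximum of `V` over a large compact
box lies on the box's boundary, where `V ≤ δ` by the boundary conditions and the decay at
infinity. Hence `w ≤ δ + η z` for all `δ, η > 0`; let both tend to `0`.
-/

open Set Filter Topology Metric

lemma IsLocalMax.deriv_deriv_nonpos {f : ℝ → ℝ} {a : ℝ} (h : IsLocalMax f a)
    (hc : ContinuousAt f a) : deriv (deriv f) a ≤ 0 := by
  by_contra! hpos
  -- by the second-derivative test `a` is also a local minimum, so `f` is locally constant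
  have hconst : f =ᶠ[𝓝 a] fun _ => f a :=
    ((isLocalMin_of_deriv_deriv_pos hpos h.deriv_eq_zero hc).and h).mono
      fun t ht => le_antisymm ht.2 ht.1
  have hderiv : deriv f =ᶠ[𝓝 a] fun _ => 0 :=
    hconst.eventuallyEq_nhds.mono fun t ht => by rw [ht.deriv_eq, deriv_const]
  rw [hderiv.deriv_eq, deriv_const] at hpos
  exact lt_irrefl 0 hpos

lemma IsLocalMax.deriv_eq_and_deriv_deriv_nonpos_of_sub_mul {f : ℝ → ℝ} {a c : ℝ}
    (h : IsLocalMax (fun t => f t - c * t) a)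
    (hf : ∀ᶠ t in 𝓝 a, DifferentiableAt ℝ f t) :
    deriv f a = c ∧ deriv (deriv f) a ≤ 0 := by
  have hderiv : deriv (fun t => f t - c * t) =ᶠ[𝓝 a] fun t => deriv f t - c :=
    hf.mono fun t ht => by
      simpa using (ht.hasDerivAt.fun_sub ((hasDerivAt_id t).const_mul c)).deriv
  refine ⟨?_, ?_⟩
  · have := h.deriv_eq_zero
    rw [hderiv.self_of_nhds] at this
    linarith
  · have := h.deriv_deriv_nonpos (hf.self_of_nhds.continuousAt.sub (by fun_prop))
    rwa [hderiv.deriv_eq, deriv_sub_const] at this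

lemma not_isLocalMax_sub_mul_fst_of_subharmonic {w : ℝ → ℝ → ℝ → ℝ} {z x y η : ℝ}
    (hz : 0 ≤ z) (hη : 0 < η)
    (hw : ∀ᶠ q in 𝓝 (z, x, y), DifferentiableAt ℝ (fun p : ℝ × ℝ × ℝ => w p.1 p.2.1 p.2.2) q)
    (hsub : 0 ≤ z * (pd1 (pd1 w) z x y + pd2 (pd2 w) z x y + pd3 (pd3 w) z x y)
      - pd1 w z x y) :
    ¬ IsLocalMax (fun p : ℝ × ℝ × ℝ => w p.1 p.2.1 p.2.2 - η * p.1) (z, x, y) := by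
  intro hmax
  have hwp := hw.self_of_nhds.continuousAt
  have hdz : ∀ᶠ t in 𝓝 z, DifferentiableAt ℝ (fun t => w t x y) t :=
    ((continuous_id.prodMk continuous_const).tendsto z).eventually hw |>.mono
      fun t ht => ht.comp t (f := fun t => (t, x, y)) (by fun_prop)
  have hmaxz : IsLocalMax (fun t => w t x y - η * t) z :=
    hmax.comp_continuous (g := fun t => (t, x, y)) (by fun_prop)
  have hmaxx : IsLocalMax (fun t => w z t y) x :=
    (hmax.comp_continuous (g := fun t => (z, t, y)) (by fun_prop)).mono
      fun t ht => by simpa using ht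
  have hmaxy : IsLocalMax (fun t => w z x t) y :=
    (hmax.comp_continuous (g := fun t => (z, x, t)) (by fun_prop)).mono
      fun t ht => by simpa using ht
  obtain ⟨hzz1, hzz2⟩ := hmaxz.deriv_eq_and_deriv_deriv_nonpos_of_sub_mul hdz
  have hxx : pd2 (pd2 w) z x y ≤ 0 :=
    hmaxx.deriv_deriv_nonpos (hwp.comp (f := fun t => (z, t, y)) (by fun_prop))
  have hyy : pd3 (pd3 w) z x y ≤ 0 :=
    hmaxy.deriv_deriv_nonpos (hwp.comp (f := fun t => (z, x, t)) (by fun_prop))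
  have hz1 : pd1 w z x y = η := hzz1
  have hzz : pd1 (pd1 w) z x y ≤ 0 := hzz2
  nlinarith

lemma le_of_forall_not_isLocalMax_slab {V : ℝ × ℝ × ℝ → ℝ} {ε m : ℝ}
    (hcont : ContinuousOn V {p | 0 ≤ p.1 ∧ p.1 ≤ ε})
    (hmax : ∀ p : ℝ × ℝ × ℝ, 0 < p.1 → p.1 < ε → ¬ IsLocalMax V p)
    (h0 : ∀ x y, V (0, x, y) ≤ m) (hε : ∀ x y, V (ε, x, y) ≤ m)
    (hfar : ∃ R, ∀ p : ℝ × ℝ × ℝ, 0 ≤ p.1 → p.1 ≤ ε → R ^ 2 ≤ p.2.1 ^ 2 + p.2.2 ^ 2 → V p ≤ m)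
    {p : ℝ × ℝ × ℝ} (hp0 : 0 ≤ p.1) (hpε : p.1 ≤ ε) : V p ≤ m := by
  obtain ⟨R, hR⟩ := hfar
  have hout : ∀ q : ℝ × ℝ × ℝ, 0 ≤ q.1 → q.1 ≤ ε → ¬ (|q.2.1| < |R| ∧ |q.2.2| < |R|) →
      V q ≤ m := by
    intro q hq0 hqε hq
    refine hR q hq0 hqε ?_
    rcases not_and_or.mp hq with hx | hy
    · nlinarith [sq_le_sq.mpr (not_lt.mp hx), sq_nonneg q.2.2]
    · nlinarith [sq_le_sq.mpr (not_lt.mp hy), sq_nonneg q.2.1]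
  set Q : Set (ℝ × ℝ × ℝ) := Icc 0 ε ×ˢ closedBall 0 |R| ×ˢ closedBall 0 |R|
  by_cases hpQ : |p.2.1| < |R| ∧ |p.2.2| < |R|
  swap
  · exact hout p hp0 hpε hpQ
  have hpQ' : p ∈ Q := ⟨⟨hp0, hpε⟩, by simpa using hpQ.1.le, by simpa using hpQ.2.le⟩
  obtain ⟨⟨z₀, x₀, y₀⟩, ⟨⟨hz₀, hz₀ε⟩, -⟩, hVmax⟩ :=
    (isCompact_Icc.prod ((isCompact_closedBall _ _).prod (isCompact_closedBall _ _))).exists_isMaxOn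
      ⟨p, hpQ'⟩ (hcont.mono fun q hq => hq.1)
  refine (hVmax hpQ').trans ?_
  rcases hz₀.eq_or_lt with rfl | hz₀
  · exact h0 x₀ y₀
  rcases hz₀ε.eq_or_lt with rfl | hz₀ε
  · exact hε x₀ y₀
  by_cases hxy : |x₀| < |R| ∧ |y₀| < |R|
  · refine absurd (hVmax.isLocalMax ?_) (hmax _ hz₀ hz₀ε)
    exact prod_mem_nhds (Icc_mem_nhds hz₀ hz₀ε) (prod_mem_nhds
      (closedBall_mem_nhds_of_mem (by simpa using hxy.1))
      (closedBall_mem_nhds_of_mem (by simpa using hxy.2)))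
  · exact hout _ hz₀.le hz₀ε.le hxy

theorem max_principle_slab_general
    (ε : ℝ)
    (w : ℝ → ℝ → ℝ → ℝ)
    (hwcont : ContinuousOn (fun p : ℝ × ℝ × ℝ => w p.1 p.2.1 p.2.2)
      {p : ℝ × ℝ × ℝ | 0 ≤ p.1 ∧ p.1 ≤ ε})
    (hwC2 : ContDiffOn ℝ 2 (fun p : ℝ × ℝ × ℝ => w p.1 p.2.1 p.2.2)
      {p : ℝ × ℝ × ℝ | 0 < p.1 ∧ p.1 < ε})
    (hsub : ∀ z x y : ℝ, 0 < z → z < ε →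
      0 ≤ z * (pd1 (pd1 w) z x y + pd2 (pd2 w) z x y + pd3 (pd3 w) z x y)
        - pd1 w z x y)
    (hbc0 : ∀ x y : ℝ, w 0 x y ≤ 0)
    (hbcε : ∀ x y : ℝ, w ε x y ≤ 0)
    (hlimsup : ∀ δ : ℝ, 0 < δ → ∃ R : ℝ, ∀ z x y : ℝ,
      0 ≤ z → z ≤ ε → R ^ 2 ≤ x ^ 2 + y ^ 2 → w z x y ≤ δ) :
    ∀ z x y : ℝ, 0 ≤ z → z ≤ ε → w z x y ≤ 0 := by
  have hopen : IsOpen {p : ℝ × ℝ × ℝ | 0 < p.1 ∧ p.1 < ε} := isOpen_Ioo.preimage continuous_fst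
  have hdiff : ∀ p : ℝ × ℝ × ℝ, 0 < p.1 → p.1 < ε →
      ∀ᶠ q in 𝓝 p, DifferentiableAt ℝ (fun p : ℝ × ℝ × ℝ => w p.1 p.2.1 p.2.2) q :=
    fun p hp0 hpε => eventually_of_mem (hopen.mem_nhds ⟨hp0, hpε⟩) fun q hq =>
      (hwC2.differentiableOn two_ne_zero).differentiableAt (hopen.mem_nhds hq)
  have hperturbed : ∀ δ η : ℝ, 0 < δ → 0 < η → ∀ z x y : ℝ, 0 ≤ z → z ≤ ε →
      w z x y ≤ δ + η * z := by
    intro δ η hδ hη z x y hz hzε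
    obtain ⟨R, hR⟩ := hlimsup δ hδ
    have hle : ∀ q : ℝ × ℝ × ℝ, 0 ≤ q.1 → w q.1 q.2.1 q.2.2 - η * q.1 ≤ w q.1 q.2.1 q.2.2 :=
      fun q hq => sub_le_self _ (mul_nonneg hη.le hq)
    have hV := le_of_forall_not_isLocalMax_slab (V := fun p => w p.1 p.2.1 p.2.2 - η * p.1)
      (m := δ) (hwcont.sub (by fun_prop))
      (fun ⟨z, x, y⟩ hz hzε => not_isLocalMax_sub_mul_fst_of_subharmonic hz.le hη
        (hdiff _ hz hzε) (hsub z x y hz hzε))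
      (fun x y => (hle (0, x, y) le_rfl).trans ((hbc0 x y).trans hδ.le))
      (fun x y => (hle (ε, x, y) (hz.trans hzε)).trans ((hbcε x y).trans hδ.le))
      ⟨R, fun ⟨z, x, y⟩ hz hzε hxy => (hle _ hz).trans (hR z x y hz hzε hxy)⟩
      (p := (z, x, y)) hz hzε
    linarith
  intro z x y hz hzε
  refine le_of_forall_pos_le_add fun e he => ?_
  have hz1 : 0 < 1 + z := by linarith
  calc w z x y ≤ e / (1 + z) + e / (1 + z) * z :=
        hperturbed _ _ (by positivity) (by positivity) z x y hz hzε
    _ = 0 + e := by rw [zero_add]; field_simp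

/-- Maximum principle for hyperbolically subharmonic functions on the slab
`{0 ≤ z ≤ ε}` in the upper half-space model of 3-dimensional hyperbolic space:
if `w` is bounded and continuous on the closed slab, C² on the open slab,
satisfies `z·(∂²_z w + ∂²_{x₂} w + ∂²_{x₃} w) − ∂_z w ≥ 0` there (i.e. is
subharmonic for the hyperbolic Laplacian), is `≤ 0` on both boundary planes
`{z = 0}` and `{z = ε}`, and has `limsup ≤ 0` as `‖(x₂,x₃)‖ → ∞` (uniformly
in `z`), then `w ≤ 0` on the whole slab. -/
theorem max_principle_slab
    (ε : ℝ) (hε : 0 < ε)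
    (w : ℝ → ℝ → ℝ → ℝ)
    (hwbdd : ∃ M : ℝ, ∀ z x y : ℝ, 0 ≤ z → z ≤ ε → |w z x y| ≤ M)
    (hwcont : ContinuousOn (fun p : ℝ × ℝ × ℝ => w p.1 p.2.1 p.2.2)
      {p : ℝ × ℝ × ℝ | 0 ≤ p.1 ∧ p.1 ≤ ε})
    (hwC2 : ContDiffOn ℝ 2 (fun p : ℝ × ℝ × ℝ => w p.1 p.2.1 p.2.2)
      {p : ℝ × ℝ × ℝ | 0 < p.1 ∧ p.1 < ε})
    (hsub : ∀ z x y : ℝ, 0 < z → z < ε →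
      0 ≤ z * (pd1 (pd1 w) z x y + pd2 (pd2 w) z x y + pd3 (pd3 w) z x y)
        - pd1 w z x y)
    (hbc0 : ∀ x y : ℝ, w 0 x y ≤ 0)
    (hbcε : ∀ x y : ℝ, w ε x y ≤ 0)
    (hlimsup : ∀ δ : ℝ, 0 < δ → ∃ R : ℝ, ∀ z x y : ℝ,
      0 ≤ z → z ≤ ε → R ^ 2 ≤ x ^ 2 + y ^ 2 → w z x y ≤ δ) :
    ∀ z x y : ℝ, 0 ≤ z → z ≤ ε → w z x y ≤ 0 :=
  max_principle_slab_general ε w hwcont hwC2 hsub hbc0 hbcε hlimsup
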